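/- arXiv:2411.17169 — 3 statements merged into one kernel-verified Lean document; each statement's English description precedes it below -/
import Mathlib

section
/- Let $a,b>0$, $1<p<2$, $1\le\theta$, $2\theta<q$, and $A,A',B>0$. Define $\Phi(t)=a t^{2-p}A+b t^{2\theta-p}A'-t^{q-p}B$ for $t>0$. Then $\lim_{t\to 0^+}\Phi(t)=0^+$ (i.e., $\Phi(t)>0$ for small $t>0$ and tends to $0$), $\lim_{t\to\infty}\Phi(t)=-\infty$, $\Phi$ attains a positive global maximum at a unique point $t_{\max}>0$, and for every $\mu$ with $0<\mu<\Phi(t_{\max})$ the equation $\Phi(t)=\mu$ has exactly two solutions $t^+<t_{\max}<t^-$. -/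
/-!
With `c₁ = aA`, `c₂ = bA'`, `c₃ = B` and `r₁ = 2 - p`, `r₂ = 2θ - p`, `r₃ = q - p` we have
`Φ t = c₁ t ^ r₁ + c₂ t ^ r₂ - c₃ t ^ r₃` and `0 < r₁ ≤ r₂ < r₃`. Its derivative is `t ^ (r₂ - 1) * g t` with
`g t = c₁ r₁ t ^ (r₁ - r₂) + c₂ r₂ - c₃ r₃ t ^ (r₃ - r₂)`, which is strictly decreasing,
positive near `0` and tends to `-∞`; so `Φ` strictly increases up to the unique zero `tmax` of `g`
and strictly decreases after it. Since `Φ → 0` at `0⁺` and `Φ → -∞` at `∞`, the intermediate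
value theorem gives exactly one solution of `Φ t = μ` on each side of `tmax`.
-/

open Set Filter Topology

lemma StrictAntiOn.exists_sign_change {g : ℝ → ℝ} (hcont : ContinuousOn g (Ioi 0))
    (hanti : StrictAntiOn g (Ioi 0)) {x y : ℝ} (hx : 0 < x) (hgx : 0 < g x) (hy : 0 < y)
    (hgy : g y < 0) : ∃ m > 0, (∀ t ∈ Ioo 0 m, 0 < g t) ∧ ∀ t ∈ Ioi m, g t < 0 := by
  have hxy : x < y := by
    by_contra! h
    exact absurd (hanti.antitoneOn hy hx h) (by linarith)
  obtain ⟨m, hm, hgm⟩ : ∃ m ∈ Icc x y, g m = 0 :=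
    intermediate_value_Icc' hxy.le (hcont.mono fun t ht ↦ hx.trans_le ht.1) ⟨hgy.le, hgx.le⟩
  have hm₀ : 0 < m := hx.trans_le hm.1
  refine ⟨m, hm₀, fun t ht ↦ ?_, fun t ht ↦ ?_⟩
  · simpa [hgm] using hanti ht.1 hm₀ ht.2
  · simpa [hgm] using hanti hm₀ (hm₀.trans ht) ht

section Unimodal

variable {f : ℝ → ℝ} {m : ℝ}

lemma strictMonoOn_Ioc_strictAntiOn_Ici_of_hasDerivAt {f' : ℝ → ℝ} (hm : 0 < m)
    (hf : ∀ t > 0, HasDerivAt f (f' t) t) (hpos : ∀ t ∈ Ioo 0 m, 0 < f' t)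
    (hneg : ∀ t ∈ Ioi m, f' t < 0) : StrictMonoOn f (Ioc 0 m) ∧ StrictAntiOn f (Ici m) := by
  have hcont : ContinuousOn f (Ioi 0) := fun t ht ↦ (hf t ht).continuousAt.continuousWithinAt
  constructor
  · refine strictMonoOn_of_hasDerivWithinAt_pos (convex_Ioc 0 m)
      (hcont.mono Ioc_subset_Ioi_self) (fun t ht ↦ (hf t ?_).hasDerivWithinAt) (fun t ht ↦ ?_)
    all_goals rw [interior_Ioc] at ht
    exacts [ht.1, hpos t ht]
  · refine strictAntiOn_of_hasDerivWithinAt_neg (convex_Ici m)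
      (hcont.mono fun t ht ↦ hm.trans_le ht) (fun t ht ↦ (hf t ?_).hasDerivWithinAt)
      (fun t ht ↦ ?_)
    all_goals rw [interior_Ici] at ht
    exacts [hm.trans ht, hneg t ht]

variable (hmono : StrictMonoOn f (Ioc 0 m)) (hanti : StrictAntiOn f (Ici m))
include hmono

lemma pos_of_strictMonoOn_Ioc (h0 : Tendsto f (𝓝[>] 0) (𝓝 0)) : ∀ t ∈ Ioc 0 m, 0 < f t := by
  intro t ht
  have hhalf : t / 2 ∈ Ioc 0 m := ⟨half_pos ht.1, (half_le_self ht.1.le).trans ht.2⟩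
  have hle : 0 ≤ f (t / 2) := by
    refine le_of_tendsto h0 ?_
    filter_upwards [Ioo_mem_nhdsGT (half_pos ht.1)] with s hs
    exact (hmono ⟨hs.1, hs.2.le.trans hhalf.2⟩ hhalf hs.2).le
  exact hle.trans_lt (hmono hhalf ht (half_lt_self ht.1))

include hanti

lemma lt_of_strictMonoOn_Ioc_of_strictAntiOn_Ici (hm : 0 < m) {t : ℝ} (ht : 0 < t)
    (htm : t ≠ m) : f t < f m := by
  rcases htm.lt_or_gt with h | h
  · exact hmono ⟨ht, h.le⟩ ⟨hm, le_rfl⟩ h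
  · exact hanti (mem_Ici.2 le_rfl) h.le h

lemma exists_two_preimages_of_strictMonoOn_Ioc_of_strictAntiOn_Ici (hm : 0 < m)
    (hcont : ContinuousOn f (Ioi 0)) (h0 : Tendsto f (𝓝[>] 0) (𝓝 0))
    (htop : Tendsto f atTop atBot) {μ : ℝ} (hμ : 0 < μ) (hμm : μ < f m) :
    ∃ tp tm : ℝ, 0 < tp ∧ tp < m ∧ m < tm ∧ f tp = μ ∧ f tm = μ ∧
      ∀ t : ℝ, 0 < t → f t = μ → t = tp ∨ t = tm := by
  obtain ⟨t₀, ht₀μ, ht₀⟩ := ((h0.eventually_lt_const hμ).and (Ioo_mem_nhdsGT hm)).exists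
  obtain ⟨t₁, ht₁μ, ht₁⟩ :=
    ((htop.eventually (eventually_lt_atBot μ)).and (eventually_gt_atTop m)).exists
  obtain ⟨tp, htp, htpμ⟩ := intermediate_value_Ioo ht₀.2.le
    (hcont.mono fun t ht ↦ ht₀.1.trans_le ht.1) ⟨ht₀μ, hμm⟩
  obtain ⟨tm, htm, htmμ⟩ := intermediate_value_Ioo' ht₁.le
    (hcont.mono fun t ht ↦ hm.trans_le ht.1) ⟨ht₁μ, hμm⟩
  have htp₀ : 0 < tp := ht₀.1.trans htp.1
  refine ⟨tp, tm, htp₀, htp.2, htm.1, htpμ, htmμ, fun t ht htμ ↦ ?_⟩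
  rcases (show t ≠ m by rintro rfl; exact hμm.ne' htμ).lt_or_gt with h | h
  · exact .inl (hmono.injOn ⟨ht, h.le⟩ ⟨htp₀, htp.2.le⟩ (htμ.trans htpμ.symm))
  · exact .inr (hanti.injOn h.le htm.1.le (htμ.trans htmμ.symm))

end Unimodal

noncomputable def rpowTrinomial (c₁ c₂ c₃ r₁ r₂ r₃ t : ℝ) : ℝ :=
  c₁ * t ^ r₁ + c₂ * t ^ r₂ - c₃ * t ^ r₃

namespace rpowTrinomial

variable {c₁ c₂ c₃ r₁ r₂ r₃ : ℝ}

lemma shift_exponents {t : ℝ} (ht : 0 < t) (s : ℝ) :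
    rpowTrinomial c₁ c₂ c₃ (r₁ + s) (r₂ + s) (r₃ + s) t =
      t ^ s * rpowTrinomial c₁ c₂ c₃ r₁ r₂ r₃ t := by
  simp only [rpowTrinomial, Real.rpow_add ht]
  ring

lemma continuousOn : ContinuousOn (rpowTrinomial c₁ c₂ c₃ r₁ r₂ r₃) (Ioi 0) := by
  intro t ht
  have hrpow (r : ℝ) : ContinuousAt (· ^ r) t :=
    Real.continuousAt_rpow_const t r (Or.inl (ne_of_gt ht))
  exact (((hrpow r₁).const_mul c₁).add ((hrpow r₂).const_mul c₂)).sub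
    ((hrpow r₃).const_mul c₃) |>.continuousWithinAt

lemma hasDerivAt {t : ℝ} (ht : 0 < t) :
    HasDerivAt (rpowTrinomial c₁ c₂ c₃ r₁ r₂ r₃)
      (rpowTrinomial (c₁ * r₁) (c₂ * r₂) (c₃ * r₃) (r₁ - 1) (r₂ - 1) (r₃ - 1) t) t := by
  have hrpow (r : ℝ) := Real.hasDerivAt_rpow_const (x := t) (p := r) (Or.inl ht.ne')
  refine ((((hrpow r₁).const_mul c₁).add ((hrpow r₂).const_mul c₂)).sub
    ((hrpow r₃).const_mul c₃)).congr_deriv ?_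
  unfold rpowTrinomial
  ring

lemma tendsto_nhdsGT_zero (h₁ : 0 < r₁) (h₂ : 0 < r₂) (h₃ : 0 < r₃) :
    Tendsto (rpowTrinomial c₁ c₂ c₃ r₁ r₂ r₃) (𝓝[>] 0) (𝓝 0) := by
  have hrpow {r : ℝ} (hr : 0 < r) : Tendsto (· ^ r) (𝓝 (0 : ℝ)) (𝓝 0) := by
    simpa [Real.zero_rpow hr.ne'] using (Real.continuous_rpow_const hr.le).tendsto 0
  have h := (((hrpow h₁).const_mul c₁).add ((hrpow h₂).const_mul c₂)).sub
    ((hrpow h₃).const_mul c₃)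
  unfold rpowTrinomial
  simpa using h.mono_left nhdsWithin_le_nhds

lemma tendsto_atTop_atBot (hc₃ : 0 < c₃) (h₁ : r₁ < r₃) (h₂ : r₂ < r₃) (h₃ : 0 < r₃) :
    Tendsto (rpowTrinomial c₁ c₂ c₃ r₁ r₂ r₃) atTop atBot := by
  have hrpow {r : ℝ} (hr : r < 0) : Tendsto (· ^ r) atTop (𝓝 (0 : ℝ)) := by
    simpa using tendsto_rpow_neg_atTop (neg_pos.2 hr)
  have hlim : Tendsto (rpowTrinomial c₁ c₂ c₃ (r₁ - r₃) (r₂ - r₃) 0) atTop (𝓝 (-c₃)) := by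
    have h := (((hrpow (sub_neg.2 h₁)).const_mul c₁).add
      ((hrpow (sub_neg.2 h₂)).const_mul c₂)).sub_const c₃
    unfold rpowTrinomial
    simpa using h
  refine ((tendsto_rpow_atTop h₃).atTop_mul_neg (neg_lt_zero.2 hc₃) hlim).congr' ?_
  filter_upwards [eventually_gt_atTop 0] with t ht
  simpa using (shift_exponents ht r₃ (r₁ := r₁ - r₃) (r₂ := r₂ - r₃) (r₃ := 0)).symm

lemma strictAntiOn (hc₁ : 0 ≤ c₁) (hc₂ : 0 ≤ c₂) (hc₃ : 0 < c₃) (h₁ : r₁ ≤ 0) (h₂ : r₂ ≤ 0)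
    (h₃ : 0 < r₃) : StrictAntiOn (rpowTrinomial c₁ c₂ c₃ r₁ r₂ r₃) (Ioi 0) := by
  intro x hx y _ hxy
  have e₁ : c₁ * y ^ r₁ ≤ c₁ * x ^ r₁ :=
    mul_le_mul_of_nonneg_left (Real.rpow_le_rpow_of_nonpos hx hxy.le h₁) hc₁
  have e₂ : c₂ * y ^ r₂ ≤ c₂ * x ^ r₂ :=
    mul_le_mul_of_nonneg_left (Real.rpow_le_rpow_of_nonpos hx hxy.le h₂) hc₂
  have e₃ : c₃ * x ^ r₃ < c₃ * y ^ r₃ :=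
    mul_lt_mul_of_pos_left (Real.rpow_lt_rpow (le_of_lt hx) hxy h₃) hc₃
  simp only [rpowTrinomial]
  linarith

lemma exists_pos (hc₁ : 0 < c₁) (hc₂ : 0 ≤ c₂) (h₁ : r₁ ≤ 0) (h₃ : 0 < r₃) :
    ∃ t > 0, 0 < rpowTrinomial c₁ c₂ c₃ r₁ r₂ r₃ t := by
  have hsmall : ∀ᶠ t in 𝓝[>] (0 : ℝ), c₃ * t ^ r₃ < c₁ := by
    have h := ((Real.continuous_rpow_const h₃.le).tendsto 0).const_mul c₃
    rw [Real.zero_rpow h₃.ne', mul_zero] at h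
    exact (h.mono_left nhdsWithin_le_nhds).eventually_lt_const hc₁
  have hunit : ∀ᶠ t in 𝓝[>] (0 : ℝ), t ∈ Ioc 0 1 := Ioc_mem_nhdsGT zero_lt_one
  obtain ⟨t, ht₃, ht₀, ht₁⟩ := (hsmall.and hunit).exists
  refine ⟨t, ht₀, ?_⟩
  have e₁ : c₁ ≤ c₁ * t ^ r₁ :=
    le_mul_of_one_le_right hc₁.le (Real.one_le_rpow_of_pos_of_le_one_of_nonpos ht₀ ht₁ h₁)
  have e₂ : 0 ≤ c₂ * t ^ r₂ := mul_nonneg hc₂ (Real.rpow_nonneg ht₀.le r₂)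
  simp only [rpowTrinomial]
  linarith

lemma exists_strictMonoOn_Ioc_strictAntiOn_Ici (hc₁ : 0 < c₁) (hc₂ : 0 ≤ c₂) (hc₃ : 0 < c₃)
    (h₁ : 0 < r₁) (h₁₂ : r₁ ≤ r₂) (h₂₃ : r₂ < r₃) :
    ∃ m > 0, StrictMonoOn (rpowTrinomial c₁ c₂ c₃ r₁ r₂ r₃) (Ioc 0 m) ∧
      StrictAntiOn (rpowTrinomial c₁ c₂ c₃ r₁ r₂ r₃) (Ici m) := by
  set g := rpowTrinomial (c₁ * r₁) (c₂ * r₂) (c₃ * r₃) (r₁ - r₂) 0 (r₃ - r₂)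
  have hderiv : ∀ t > 0, HasDerivAt (rpowTrinomial c₁ c₂ c₃ r₁ r₂ r₃) (t ^ (r₂ - 1) * g t) t := by
    intro t ht
    refine (hasDerivAt ht).congr_deriv ?_
    rw [← shift_exponents ht, sub_add_sub_cancel, sub_add_sub_cancel, zero_add]
  have hr₂ : 0 < r₂ := h₁.trans_le h₁₂
  have hr₂₃ : 0 < r₃ - r₂ := sub_pos.2 h₂₃
  have hc₃r₃ : 0 < c₃ * r₃ := mul_pos hc₃ (hr₂.trans h₂₃)
  have hg_anti : StrictAntiOn g (Ioi 0) :=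
    strictAntiOn (mul_pos hc₁ h₁).le (mul_nonneg hc₂ hr₂.le) hc₃r₃ (sub_nonpos.2 h₁₂) le_rfl hr₂₃
  obtain ⟨x, hx, hgx⟩ := exists_pos (c₃ := c₃ * r₃) (r₂ := 0) (mul_pos hc₁ h₁)
    (mul_nonneg hc₂ hr₂.le) (sub_nonpos.2 h₁₂) hr₂₃
  have hg_top : Tendsto g atTop atBot :=
    tendsto_atTop_atBot hc₃r₃ (sub_lt_sub_right (h₁₂.trans_lt h₂₃) r₂) hr₂₃ hr₂₃
  obtain ⟨y, hgy, hy⟩ :=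
    ((hg_top.eventually (eventually_lt_atBot 0)).and (eventually_gt_atTop 0)).exists
  obtain ⟨m, hm, hg_pos, hg_neg⟩ := hg_anti.exists_sign_change continuousOn hx hgx hy hgy
  exact ⟨m, hm, strictMonoOn_Ioc_strictAntiOn_Ici_of_hasDerivAt hm hderiv
    (fun t ht ↦ mul_pos (Real.rpow_pos_of_pos ht.1 _) (hg_pos t ht))
    (fun t ht ↦ mul_neg_of_pos_of_neg (Real.rpow_pos_of_pos (hm.trans ht) _) (hg_neg t ht))⟩

end rpowTrinomial

theorem stmt_1_general (a b p θ q A A' B : ℝ) (ha : 0 < a) (hb : 0 < b)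
    (hp2 : p < 2) (hθ : 1 ≤ θ) (hθq : 2 * θ < q)
    (hA : 0 < A) (hA' : 0 < A') (hB : 0 < B)
    (Φ : ℝ → ℝ)
    (hΦ : ∀ t : ℝ, Φ t =
      a * t ^ (2 - p) * A + b * t ^ (2 * θ - p) * A' - t ^ (q - p) * B) :
    Tendsto Φ (𝓝[>] (0 : ℝ)) (𝓝 0) ∧
    (∀ᶠ t in 𝓝[>] (0 : ℝ), 0 < Φ t) ∧
    Tendsto Φ atTop atBot ∧
    ∃ tmax : ℝ, 0 < tmax ∧ 0 < Φ tmax ∧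
      (∀ t : ℝ, 0 < t → t ≠ tmax → Φ t < Φ tmax) ∧
      ∀ μ : ℝ, 0 < μ → μ < Φ tmax →
        ∃ tp tm : ℝ, 0 < tp ∧ tp < tmax ∧ tmax < tm ∧
          Φ tp = μ ∧ Φ tm = μ ∧
          ∀ t : ℝ, 0 < t → Φ t = μ → t = tp ∨ t = tm := by
  have hΦ_eq : Φ = rpowTrinomial (a * A) (b * A') B (2 - p) (2 * θ - p) (q - p) := by
    funext t
    rw [hΦ, rpowTrinomial]
    ring
  have hr₁ : 0 < 2 - p := by linarith
  obtain ⟨m, hm, hmono, hanti⟩ : ∃ m > 0, StrictMonoOn Φ (Ioc 0 m) ∧ StrictAntiOn Φ (Ici m) :=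
    hΦ_eq ▸ rpowTrinomial.exists_strictMonoOn_Ioc_strictAntiOn_Ici (by positivity)
      (by positivity) hB hr₁ (by linarith) (by linarith)
  have h0 : Tendsto Φ (𝓝[>] 0) (𝓝 0) :=
    hΦ_eq ▸ rpowTrinomial.tendsto_nhdsGT_zero hr₁ (by linarith) (by linarith)
  have htop : Tendsto Φ atTop atBot :=
    hΦ_eq ▸ rpowTrinomial.tendsto_atTop_atBot hB (by linarith) (by linarith) (by linarith)
  have hpos := pos_of_strictMonoOn_Ioc hmono h0
  refine ⟨h0, ?_, htop, m, hm, hpos m ⟨hm, le_rfl⟩,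
    fun t ↦ lt_of_strictMonoOn_Ioc_of_strictAntiOn_Ici hmono hanti hm,
    fun μ ↦ exists_two_preimages_of_strictMonoOn_Ioc_of_strictAntiOn_Ici hmono hanti hm
      (hΦ_eq ▸ rpowTrinomial.continuousOn) h0 htop⟩
  filter_upwards [Ioc_mem_nhdsGT hm] with t ht using hpos t ht

theorem stmt_1 (a b p θ q A A' B : ℝ) (ha : 0 < a) (hb : 0 < b)
    (hp1 : 1 < p) (hp2 : p < 2) (hθ : 1 ≤ θ) (hθq : 2 * θ < q)
    (hA : 0 < A) (hA' : 0 < A') (hB : 0 < B)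
    (Φ : ℝ → ℝ)
    (hΦ : ∀ t : ℝ, Φ t =
      a * t ^ (2 - p) * A + b * t ^ (2 * θ - p) * A' - t ^ (q - p) * B) :
    Tendsto Φ (𝓝[>] (0 : ℝ)) (𝓝 0) ∧
    (∀ᶠ t in 𝓝[>] (0 : ℝ), 0 < Φ t) ∧
    Tendsto Φ atTop atBot ∧
    ∃ tmax : ℝ, 0 < tmax ∧ 0 < Φ tmax ∧
      (∀ t : ℝ, 0 < t → t ≠ tmax → Φ t < Φ tmax) ∧
      ∀ μ : ℝ, 0 < μ → μ < Φ tmax →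
        ∃ tp tm : ℝ, 0 < tp ∧ tp < tmax ∧ tmax < tm ∧
          Φ tp = μ ∧ Φ tm = μ ∧
          ∀ t : ℝ, 0 < t → Φ t = μ → t = tp ∨ t = tm :=
  stmt_1_general a b p θ q A A' B ha hb hp2 hθ hθq hA hA' hB Φ hΦ
end

section
/- Let $a,b>0$, $1<p<2\le 2\theta<q$, $\lambda>0$, and let $R,P,Q$ be reals with $R>0$, $Q\ge 0$, satisfying $aR+bR^{\theta}=\lambda P+Q$ and additionally the $\mathcal N^+$ condition $(2-p)aR+(2\theta-p)bR^{\theta}>(q-p)Q$. Then $J:=\left(\frac12-\frac1q\right)aR+\left(\frac1{2\theta}-\frac1q\right)bR^{\theta}-\lambda\left(\frac1p-\frac1q\right)P<0$. Consequently $\inf_{\mathcal N^+_\lambda}J_\lambda<0$. -/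
/-!
Substituting the Nehari identity `λP = aR + bR^θ - Q` turns the energy into
`(1/2 - 1/p) aR + (1/(2θ) - 1/p) bR^θ + (1/p - 1/q) Q`; bounding `Q` by the `𝒩⁺` condition
leaves `aR` and `bR^θ` with the coefficients `(2-p)(2-q)/(2pq)` and `(2θ-p)(2θ-q)/(2θpq)`,
which are nonpositive because `p < 2 ≤ 2θ < q`.
-/

lemma fibering_energy_eq {p q r s A B Q : ℝ} (hp : p ≠ 0) (hq : q ≠ 0) (hr : r ≠ 0)
    (hs : s ≠ 0) :
    (1 / r - 1 / q) * A + (1 / s - 1 / q) * B - (1 / p - 1 / q) * (A + B - Q)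
      = ((r - p) * (r - q) / r * A + (s - p) * (s - q) / s * B
          - ((r - p) * A + (s - p) * B - (q - p) * Q)) / (p * q) := by
  field_simp
  ring

lemma fibering_energy_neg {p q r s A B Q : ℝ} (hp : 0 < p) (hpr : p ≤ r) (hrq : r ≤ q)
    (hps : p ≤ s) (hsq : s ≤ q) (hA : 0 ≤ A) (hB : 0 ≤ B)
    (hQ : (q - p) * Q < (r - p) * A + (s - p) * B) :
    (1 / r - 1 / q) * A + (1 / s - 1 / q) * B - (1 / p - 1 / q) * (A + B - Q) < 0 := by
  have hr : 0 < r := hp.trans_le hpr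
  have hs : 0 < s := hp.trans_le hps
  have hq : 0 < q := hr.trans_le hrq
  rw [fibering_energy_eq hp.ne' hq.ne' hr.ne' hs.ne']
  have hcoefA : (r - p) * (r - q) / r * A ≤ 0 :=
    mul_nonpos_of_nonpos_of_nonneg
      (div_nonpos_of_nonpos_of_nonneg
        (mul_nonpos_of_nonneg_of_nonpos (by linarith) (by linarith)) hr.le) hA
  have hcoefB : (s - p) * (s - q) / s * B ≤ 0 :=
    mul_nonpos_of_nonpos_of_nonneg
      (div_nonpos_of_nonpos_of_nonneg
        (mul_nonpos_of_nonneg_of_nonpos (by linarith) (by linarith)) hs.le) hB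
  exact div_neg_of_neg_of_pos (by linarith) (mul_pos hp hq)

theorem stmt_10_general (a b p θ q lam R P Q : ℝ) (ha : 0 < a) (hb : 0 < b)
    (hp1 : 1 < p) (hp2 : p < 2) (hθ : 2 ≤ 2 * θ) (hθq : 2 * θ < q)
    (hR : 0 < R)
    (hNehari : a * R + b * R ^ θ = lam * P + Q)
    (hNplus : (q - p) * Q < (2 - p) * a * R + (2 * θ - p) * b * R ^ θ) :
    (1 / 2 - 1 / q) * a * R + (1 / (2 * θ) - 1 / q) * b * R ^ θ
      - lam * (1 / p - 1 / q) * P < 0 := by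
  have hlamP : lam * P = a * R + b * R ^ θ - Q := by linarith
  calc (1 / 2 - 1 / q) * a * R + (1 / (2 * θ) - 1 / q) * b * R ^ θ
        - lam * (1 / p - 1 / q) * P
      = (1 / 2 - 1 / q) * (a * R) + (1 / (2 * θ) - 1 / q) * (b * R ^ θ)
          - (1 / p - 1 / q) * (lam * P) := by ring
    _ = (1 / 2 - 1 / q) * (a * R) + (1 / (2 * θ) - 1 / q) * (b * R ^ θ)
          - (1 / p - 1 / q) * (a * R + b * R ^ θ - Q) := by rw [hlamP]
    _ < 0 :=
      fibering_energy_neg (by linarith) hp2.le (by linarith) (by linarith) hθq.le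
        (mul_pos ha hR).le (mul_pos hb (Real.rpow_pos_of_pos hR θ)).le
        (by linarith)

theorem stmt_10 (a b p θ q lam R P Q : ℝ) (ha : 0 < a) (hb : 0 < b)
    (hp1 : 1 < p) (hp2 : p < 2) (hθ : 2 ≤ 2 * θ) (hθq : 2 * θ < q)
    (hlam : 0 < lam) (hR : 0 < R) (hQ : 0 ≤ Q)
    (hNehari : a * R + b * R ^ θ = lam * P + Q)
    (hNplus : (q - p) * Q < (2 - p) * a * R + (2 * θ - p) * b * R ^ θ) :
    (1 / 2 - 1 / q) * a * R + (1 / (2 * θ) - 1 / q) * b * R ^ θ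
      - lam * (1 / p - 1 / q) * P < 0 :=
  stmt_10_general a b p θ q lam R P Q ha hb hp1 hp2 hθ hθq hR hNehari hNplus
end

section
/- Let $1<p<2\le 2\theta<q$, $b>0$, $S>0$, $\|f\|>0$, and set $\Lambda_1=\left(\frac{q-2\theta}{2\theta-p}\right)\left(\frac{b(2\theta-p)}{q-p}\right)^{\frac{q-p}{q-2\theta}}\big(S^{q/2}\big)^{\frac{2\theta-p}{q-2\theta}}\frac{S^{p/2}}{\|f\|}$. Suppose $u$ satisfies the Sobolev-type bounds $\int|u|^{q}\le S^{-q/2}\rho(u)^{q}$ and $\int f|u|^{p}\le S^{-p/2}\|f\|\rho(u)^{p}$ with $\rho(u)>0$. Then for every $\lambda\in(0,\Lambda_1)$, $\max_{t>0}\left[a t^{2-p}\rho(u)^2+b t^{2\theta-p}\rho(u)^{2\theta}-t^{q-p}\int|u|^{q}\right]>\lambda\int f|u|^{p}$ for any $a>0$. -/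
/-!
Dropping the positive term `a t^(2-p) ρ²`, it suffices to beat `λ ∫ f|u|^p` with the reduced
function `b t^α A - t^β C` (`α = 2θ - p`, `β = q - p`, `A = ρ^{2θ}`, `C = S^{-q/2} ρ^q`).
At its critical point `t^{β-α} = bαA / (βC)` it takes the value
`((β-α)/α) (bα/β)^{β/(β-α)} A^{β/(β-α)} C^{-α/(β-α)}`, and the powers of `ρ` collapse to `ρ^p`,
so this value is exactly `Λ₁` times the Sobolev bound `S^{-p/2} ‖f‖ ρ^p` on `∫ f|u|^p`.
-/

open Real

lemma exists_pos_mul_rpow_sub_rpow_eq {α β b A C : ℝ} (hα : 0 < α) (hαβ : α < β)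
    (hb : 0 < b) (hA : 0 < A) (hC : 0 < C) :
    ∃ t > 0, b * t ^ α * A - t ^ β * C
      = (β - α) / α * (b * α / β) ^ (β / (β - α)) * A ^ (β / (β - α))
        * C ^ (-(α / (β - α))) := by
  have hγ : 0 < β - α := by linarith
  have hβ : 0 < β := by linarith
  set c := b * α / β
  have hc : 0 < c := by positivity
  have hsplit : β / (β - α) = α / (β - α) + 1 := by field_simp; ring
  set t := (c * A / C) ^ (1 / (β - α))
  have ht : 0 < t := by positivity
  have htγ : t ^ (β - α) = c * A / C := by
    rw [← rpow_mul (by positivity), one_div_mul_cancel hγ.ne', rpow_one]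
  have htβ : t ^ β = t ^ α * (c * A / C) := by
    rw [← htγ, ← rpow_add ht]; ring_nf
  have htα : t ^ α = c ^ (α / (β - α)) * A ^ (α / (β - α)) * C ^ (-(α / (β - α))) := by
    rw [← rpow_mul (by positivity), one_div_mul_eq_div, div_rpow (by positivity) hC.le,
      mul_rpow hc.le hA.le, rpow_neg hC.le, div_eq_mul_inv]
  have hbc : b - c = (β - α) / α * c := by
    simp only [c]; field_simp
  refine ⟨t, ht, ?_⟩
  calc b * t ^ α * A - t ^ β * C
        = (β - α) / α * (c * c ^ (α / (β - α))) * (A * A ^ (α / (β - α)))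
          * C ^ (-(α / (β - α))) := by
        rw [htβ, mul_div_assoc', div_mul_cancel₀ _ hC.ne', htα]
        linear_combination (c ^ (α / (β - α)) * A ^ (α / (β - α)) * C ^ (-(α / (β - α))) * A) * hbc
    _ = _ := by
        rw [hsplit, rpow_add_one hc.ne', rpow_add_one hA.ne']
        ring

lemma rpow_rpow_mul_rpow_rpow_neg_eq {p r q S ρ : ℝ} (hS : 0 < S) (hρ : 0 < ρ) (hrq : r < q) :
    (ρ ^ r) ^ ((q - p) / (q - r)) * (S ^ (-(q / 2)) * ρ ^ q) ^ (-((r - p) / (q - r)))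
      = (S ^ (q / 2)) ^ ((r - p) / (q - r)) * ρ ^ p := by
  have hγ : q - r ≠ 0 := by linarith
  rw [rpow_neg hS.le (q / 2), mul_rpow (by positivity) (by positivity), inv_rpow (by positivity),
    rpow_neg (by positivity) ((r - p) / (q - r)), inv_inv,
    ← rpow_mul hρ.le, ← rpow_mul hρ.le, mul_left_comm, ← rpow_add hρ]
  congr 2
  field_simp
  ring

theorem stmt_17_general (b p θ q S normf : ℝ) (hb : 0 < b)
    (hp2 : p < 2) (hθ : 2 ≤ 2 * θ) (hθq : 2 * θ < q)
    (hS : 0 < S) (hnormf : 0 < normf)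
    (Λ₁ : ℝ)
    (hΛ₁ : Λ₁ = ((q - 2 * θ) / (2 * θ - p))
        * (b * (2 * θ - p) / (q - p)) ^ ((q - p) / (q - 2 * θ))
        * (S ^ (q / 2)) ^ ((2 * θ - p) / (q - 2 * θ)) * S ^ (p / 2) / normf)
    (ρ Iq If : ℝ) (hρ : 0 < ρ)
    (hIq : Iq ≤ S ^ (-(q / 2)) * ρ ^ q)
    (hIf : If ≤ S ^ (-(p / 2)) * normf * ρ ^ p) :
    ∀ lam : ℝ, 0 < lam → lam < Λ₁ → ∀ a : ℝ, 0 < a →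
      ∃ t : ℝ, 0 < t ∧
        lam * If < a * t ^ (2 - p) * ρ ^ 2 + b * t ^ (2 * θ - p) * ρ ^ (2 * θ)
          - t ^ (q - p) * Iq := by
  intro lam hlam hlamΛ a ha
  obtain ⟨t, ht, hmax⟩ := exists_pos_mul_rpow_sub_rpow_eq (α := 2 * θ - p) (β := q - p)
    (by linarith) (by linarith) hb (A := ρ ^ (2 * θ)) (by positivity)
    (C := S ^ (-(q / 2)) * ρ ^ q) (by positivity)
  rw [show q - p - (2 * θ - p) = q - 2 * θ by ring, mul_assoc _ ((ρ ^ (2 * θ)) ^ _),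
    rpow_rpow_mul_rpow_rpow_neg_eq hS hρ hθq] at hmax
  have hΛ₁_bound : Λ₁ * (S ^ (-(p / 2)) * normf * ρ ^ p)
      = b * t ^ (2 * θ - p) * ρ ^ (2 * θ) - t ^ (q - p) * (S ^ (-(q / 2)) * ρ ^ q) := by
    rw [hmax, hΛ₁, rpow_neg hS.le]
    field_simp
  refine ⟨t, ht, ?_⟩
  calc lam * If ≤ lam * (S ^ (-(p / 2)) * normf * ρ ^ p) := by gcongr
    _ < Λ₁ * (S ^ (-(p / 2)) * normf * ρ ^ p) := by gcongr
    _ ≤ b * t ^ (2 * θ - p) * ρ ^ (2 * θ) - t ^ (q - p) * Iq := by rw [hΛ₁_bound]; gcongr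
    _ < _ := by linarith [show 0 < a * t ^ (2 - p) * ρ ^ 2 by positivity]

theorem stmt_17 (b p θ q S normf : ℝ) (hb : 0 < b)
    (hp1 : 1 < p) (hp2 : p < 2) (hθ : 2 ≤ 2 * θ) (hθq : 2 * θ < q)
    (hS : 0 < S) (hnormf : 0 < normf)
    (Λ₁ : ℝ)
    (hΛ₁ : Λ₁ = ((q - 2 * θ) / (2 * θ - p))
        * (b * (2 * θ - p) / (q - p)) ^ ((q - p) / (q - 2 * θ))
        * (S ^ (q / 2)) ^ ((2 * θ - p) / (q - 2 * θ)) * S ^ (p / 2) / normf)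
    (ρ Iq If : ℝ) (hρ : 0 < ρ)
    (hIq : Iq ≤ S ^ (-(q / 2)) * ρ ^ q)
    (hIf : If ≤ S ^ (-(p / 2)) * normf * ρ ^ p) :
    ∀ lam : ℝ, 0 < lam → lam < Λ₁ → ∀ a : ℝ, 0 < a →
      ∃ t : ℝ, 0 < t ∧
        lam * If < a * t ^ (2 - p) * ρ ^ 2 + b * t ^ (2 * θ - p) * ρ ^ (2 * θ)
          - t ^ (q - p) * Iq :=
  stmt_17_general b p θ q S normf hb hp2 hθ hθq hS hnormf Λ₁ hΛ₁ ρ Iq If hρ hIq hIf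
end
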